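/- For every real r ≥ 1 and every integer n ≥ 1, (r/(r+1))·n^r(n+1)^r/((n+1)^r − n^r) ≥ n^r(n + 1/2)(n+1)^r/((n+1)^{r+1} − n^{r+1}); equivalently ((n+1)^{r+1} − n^{r+1})/((n+1)^r − n^r) ≥ ((r+1)/r)(n + 1/2). -/

import Mathlib

/-!
For `r ≥ 1` the function `t ↦ t ^ (1 / r)` is concave, so on `[a ^ r, b ^ r]` it lies above its
chord, and integrating (the right half of the Hermite–Hadamard inequality) gives
`(b ^ r - a ^ r) * (a + b) / 2 ≤ ∫ t in a ^ r..b ^ r, t ^ (1 / r) = r / (r + 1) * (b ^ (r + 1) - a ^ (r + 1))`.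
With `a = n`, `b = n + 1` both inequalities are rearrangements of this one.
-/

open Set intervalIntegral

theorem ConcaveOn.chord_le {f : ℝ → ℝ} {a b x : ℝ} (hf : ConcaveOn ℝ (Icc a b) f) (hab : a < b)
    (hx : x ∈ Icc a b) : f a + (f b - f a) / (b - a) * (x - a) ≤ f x := by
  have hba : 0 < b - a := sub_pos.2 hab
  have key := hf.2 (left_mem_Icc.2 hab.le) (right_mem_Icc.2 hab.le)
    (div_nonneg (sub_nonneg.2 hx.2) hba.le) (div_nonneg (sub_nonneg.2 hx.1) hba.le)
    (by field_simp; ring)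
  simp only [smul_eq_mul] at key
  have hpt : (b - x) / (b - a) * a + (x - a) / (b - a) * b = x := by
    field_simp; ring
  rw [hpt] at key
  calc f a + (f b - f a) / (b - a) * (x - a)
      = (b - x) / (b - a) * f a + (x - a) / (b - a) * f b := by field_simp; ring
    _ ≤ f x := key

theorem ConcaveOn.trapezoid_le_integral {f : ℝ → ℝ} {a b : ℝ} (hf : ConcaveOn ℝ (Icc a b) f)
    (hab : a ≤ b) (hfi : IntervalIntegrable f MeasureTheory.volume a b) :
    (b - a) * ((f a + f b) / 2) ≤ ∫ x in a..b, f x := by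
  rcases hab.eq_or_lt with rfl | hab
  · simp
  set s := (f b - f a) / (b - a)
  have hchord : ∫ x in a..b, (f a + s * (x - a)) = (b - a) * ((f a + f b) / 2) := by
    rw [integral_add intervalIntegrable_const (Continuous.intervalIntegrable (by fun_prop) _ _)]
    simp [s]
    field_simp
    ring
  rw [← hchord]
  exact integral_mono_on hab.le (Continuous.intervalIntegrable (by fun_prop) _ _) hfi
    fun x hx => hf.chord_le hab hx

theorem rpow_sub_rpow_mul_add_div_two_le {r a b : ℝ} (hr : 1 ≤ r) (ha : 0 ≤ a) (hab : a ≤ b) :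
    (b ^ r - a ^ r) * ((a + b) / 2) ≤ r / (r + 1) * (b ^ (r + 1) - a ^ (r + 1)) := by
  have hr0 : 0 < r := zero_lt_one.trans_le hr
  have hb : 0 ≤ b := ha.trans hab
  have hinv : -1 < r⁻¹ := by linarith [inv_pos.2 hr0]
  have hconc : ConcaveOn ℝ (Icc (a ^ r) (b ^ r)) fun t : ℝ => t ^ r⁻¹ :=
    (Real.concaveOn_rpow (inv_nonneg.2 hr0.le) (inv_le_one_of_one_le₀ hr)).subset
      (fun t ht => (Real.rpow_nonneg ha r).trans ht.1) (convex_Icc _ _)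
  have h := hconc.trapezoid_le_integral (Real.rpow_le_rpow ha hab hr0.le)
    (intervalIntegrable_rpow' hinv)
  have hpow : ∀ {x : ℝ}, 0 ≤ x → (x ^ r) ^ (r⁻¹ + 1) = x ^ (r + 1) := fun hx => by
    rw [← Real.rpow_mul hx]; congr 1; field_simp; ring
  rw [integral_rpow (Or.inl hinv), Real.rpow_rpow_inv ha hr0.ne',
    Real.rpow_rpow_inv hb hr0.ne', hpow ha, hpow hb] at h
  convert h using 1
  field_simp
  ring

theorem levin_steckin_stronger (r : ℝ) (hr : 1 ≤ r) (n : ℕ) :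
    ((r / (r + 1)) * ((n : ℝ) ^ r * ((n : ℝ) + 1) ^ r / (((n : ℝ) + 1) ^ r - (n : ℝ) ^ r)) ≥
      (n : ℝ) ^ r * ((n : ℝ) + 1 / 2) * ((n : ℝ) + 1) ^ r /
        (((n : ℝ) + 1) ^ (r + 1) - (n : ℝ) ^ (r + 1))) ∧
    ((((n : ℝ) + 1) ^ (r + 1) - (n : ℝ) ^ (r + 1)) / (((n : ℝ) + 1) ^ r - (n : ℝ) ^ r) ≥
      ((r + 1) / r) * ((n : ℝ) + 1 / 2)) := by
  have hr0 : 0 < r := zero_lt_one.trans_le hr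
  have hn : (0 : ℝ) ≤ n := n.cast_nonneg
  set a : ℝ := (n : ℝ)
  set D := (a + 1) ^ r - a ^ r
  set D' := (a + 1) ^ (r + 1) - a ^ (r + 1)
  have hD : 0 < D := sub_pos.2 (Real.rpow_lt_rpow hn (lt_add_one _) hr0)
  have hD' : 0 < D' := sub_pos.2 (Real.rpow_lt_rpow hn (lt_add_one _) (by linarith))
  have key : D * (a + 1 / 2) ≤ r / (r + 1) * D' := by
    convert rpow_sub_rpow_mul_add_div_two_le hr hn (le_add_of_nonneg_right zero_le_one) using 2
    ring
  have hmid : a + 1 / 2 ≤ r * D' / ((r + 1) * D) := by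
    rw [le_div_iff₀ (by positivity)]
    rw [div_mul_eq_mul_div, le_div_iff₀ (by positivity)] at key
    linarith
  constructor
  · rw [ge_iff_le, div_le_iff₀ hD']
    calc a ^ r * (a + 1 / 2) * (a + 1) ^ r ≤ a ^ r * (r * D' / ((r + 1) * D)) * (a + 1) ^ r := by
          gcongr
      _ = _ := by field_simp
  · calc (r + 1) / r * (a + 1 / 2) ≤ (r + 1) / r * (r * D' / ((r + 1) * D)) := by gcongr
      _ = D' / D := by field_simp
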